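/- Two disjoint unions of cycles with different multisets of cycle lengths are not isomorphic. Precisely: if G_1 is a disjoint union of cycles of lengths given by the finite multiset N_1 and G_2 is a disjoint union of cycles of lengths given by the finite multiset N_2, and G_1 ≅ G_2, then N_1 = N_2. -/
import Mathlib

/-- Two disjoint unions of cycles (i.e. 2-regular finite graphs) whose multisets of
cycle lengths (numbers of vertices of the connected components) are `N₁` and `N₂`:
if the graphs are isomorphic then `N₁ = N₂`. -/
theorem stmt_5 {V₁ V₂ : Type*} [Fintype V₁] [Fintype V₂]
    (G₁ : SimpleGraph V₁) (G₂ : SimpleGraph V₂)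
    [DecidableRel G₁.Adj] [DecidableRel G₂.Adj]
    [Fintype G₁.ConnectedComponent] [Fintype G₂.ConnectedComponent]
    (hreg₁ : ∀ v : V₁, G₁.degree v = 2) (hreg₂ : ∀ v : V₂, G₂.degree v = 2)
    (N₁ N₂ : Multiset ℕ)
    (hN₁ : N₁ = (Finset.univ.val.map fun c : G₁.ConnectedComponent => c.supp.ncard))
    (hN₂ : N₂ = (Finset.univ.val.map fun c : G₂.ConnectedComponent => c.supp.ncard))
    (φ : G₁ ≃g G₂) :
    N₁ = N₂ := by
  subst hN₁ hN₂
  have h := Finset.map_univ_equiv φ.connectedComponentEquiv.symm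
  rw [← h]
  simp only [Finset.map_val, Multiset.map_map, Function.comp]
  congr 1
  ext c
  have hc : φ.connectedComponentEquiv.symm.toEmbedding c = φ.symm.connectedComponentEquiv c := by
    rw [SimpleGraph.Iso.connectedComponentEquiv_symm]; rfl
  rw [hc]
  exact congrArg ENat.toNat
    (Set.encard_congr (SimpleGraph.ConnectedComponent.isoEquivSupp φ.symm c)).symm
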